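/- arXiv:2004.08374 — 4 statements merged into one kernel-verified Lean document; each statement's English description precedes it below -/
import Mathlib

section
/- For every unweighted instance F of a Max-CSP Λ and every ε > 0, there exists a regular unweighted instance G of the same Max-CSP Λ such that: (a) Opt(F) ≤ Opt(G), and (b) for every assignment ζ to the variables of G there exists an assignment χ to the variables of F with Val_χ(F) ≥ Val_ζ(G) − ε. -/
open Finset

/-- An instance of a CSP over domain `Fin q` with `n` variables: a finite list of
constraints, each a predicate applied to a scope of distinct variables, with
nonnegative weights summing to `1`. -/
structure CSPInstance (q n : ℕ) where
  m : ℕ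
  ar : Fin m → ℕ
  pred : (r : Fin m) → ((Fin (ar r) → Fin q) → Bool)
  scope : (r : Fin m) → Fin (ar r) → Fin n
  scope_inj : ∀ r, Function.Injective (scope r)
  w : Fin m → ℝ
  w_nonneg : ∀ r, 0 ≤ w r
  w_sum : ∑ r, w r = 1

namespace CSPInstance

variable {q n : ℕ}

/-- The value of an assignment: the total weight of satisfied constraints. -/
noncomputable def val (F : CSPInstance q n) (χ : Fin n → Fin q) : ℝ :=
  ∑ r, F.w r * (if F.pred r (fun i => χ (F.scope r i)) then 1 else 0)

/-- The optimum of a Max-CSP instance. -/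
noncomputable def optMax (F : CSPInstance q n) : ℝ :=
  ⨆ χ : Fin n → Fin q, F.val χ

/-- The optimum of a Min-CSP instance. -/
noncomputable def optMin (F : CSPInstance q n) : ℝ :=
  ⨅ χ : Fin n → Fin q, F.val χ

/-- An instance is unweighted if all constraints have weight `1/m`. -/
def Unweighted (F : CSPInstance q n) : Prop :=
  ∀ r, F.w r = 1 / F.m

/-- The degree of a variable: the number of constraints whose scope contains it. -/
noncomputable def degree (F : CSPInstance q n) (i : Fin n) : ℕ :=
  (Finset.univ.filter (fun r => ∃ j, F.scope r j = i)).card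

/-- An instance is regular if all variables have the same degree. -/
def Regular (F : CSPInstance q n) : Prop :=
  ∃ d, ∀ i, F.degree i = d

/-- `F` is an instance of the CSP `Λ`, viewed as a collection of predicates
(with their arities). -/
def InstanceOf (F : CSPInstance q n)
    (Λ : Set ((k : ℕ) × ((Fin k → Fin q) → Bool))) : Prop :=
  ∀ r, (⟨F.ar r, F.pred r⟩ : (k : ℕ) × ((Fin k → Fin q) → Bool)) ∈ Λ

end CSPInstance

/-!
Split every variable `i` of `F` into `degree i` copies, and every constraint `r` into one
constraint for each selector `u` choosing a copy of every variable. A copy of `i` then lies in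
`degree i * ∏_{i' ≠ i} degree i'` constraints (products over the variables that occur at all),
the same number for every copy, so the new instance is regular.
Giving all copies of a variable the same value preserves the value of an assignment. Conversely,
the value of any assignment of the new instance is the average over `u` of the values of the
assignments of `F` that read every variable off its `u`-selected copy, so one of them does at
least as well.
-/

theorem sigma_mk_apply_eq_mk_iff {ι : Type*} {β : ι → Type*} (u : ∀ i, β i) {x a : ι}
    {b : β a} : (⟨x, u x⟩ : Sigma β) = ⟨a, b⟩ ↔ x = a ∧ u a = b := by
  constructor
  · rintro ⟨⟩
    exact ⟨rfl, rfl⟩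
  · rintro ⟨rfl, rfl⟩
    rfl

namespace CSPInstance

variable {q n : ℕ}

theorem m_pos (F : CSPInstance q n) : 0 < F.m := by
  refine Nat.pos_of_ne_zero fun hm => ?_
  have h := F.w_sum
  have : IsEmpty (Fin F.m) := by rw [hm]; infer_instance
  simp at h

theorem val_of_unweighted {F : CSPInstance q n} (hF : F.Unweighted) (χ : Fin n → Fin q) :
    F.val χ = (∑ r, if F.pred r (χ ∘ F.scope r) then 1 else 0) / F.m := by
  rw [val, sum_div]
  refine sum_congr rfl fun r _ => ?_
  rw [hF r, one_div_mul_eq_div]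
  rfl

theorem optMax_le_optMax_of_forall {n' : ℕ} [Nonempty (Fin n → Fin q)] {F : CSPInstance q n}
    {G : CSPInstance q n'} (h : ∀ χ, ∃ ζ, F.val χ ≤ G.val ζ) : F.optMax ≤ G.optMax :=
  ciSup_le fun χ =>
    let ⟨ζ, hζ⟩ := h χ
    le_ciSup_of_le (Set.finite_range _).bddAbove ζ hζ

section OfConstraints

variable {V K : Type*} [Fintype V] [Fintype K] [Nonempty K] (ar : K → ℕ)
  (pred : ∀ k, (Fin (ar k) → Fin q) → Bool) (scope : ∀ k, Fin (ar k) → V)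
  (scope_inj : ∀ k, Function.Injective (scope k))

noncomputable def ofConstraints : CSPInstance q (Fintype.card V) where
  m := Fintype.card K
  ar ρ := ar ((Fintype.equivFin K).symm ρ)
  pred ρ := pred _
  scope ρ := Fintype.equivFin V ∘ scope _
  scope_inj _ := (Fintype.equivFin V).injective.comp (scope_inj _)
  w _ := 1 / Fintype.card K
  w_nonneg _ := by positivity
  w_sum := by simp [Fintype.card_pos.ne']

theorem unweighted_ofConstraints : (ofConstraints ar pred scope scope_inj).Unweighted :=
  fun _ => rfl

theorem instanceOf_ofConstraints {Λ : Set ((k : ℕ) × ((Fin k → Fin q) → Bool))}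
    (h : ∀ k, ⟨ar k, pred k⟩ ∈ Λ) : (ofConstraints ar pred scope scope_inj).InstanceOf Λ :=
  fun _ => h _

theorem val_ofConstraints (ζ : Fin (Fintype.card V) → Fin q) :
    (ofConstraints ar pred scope scope_inj).val ζ =
      (∑ k, if pred k (ζ ∘ Fintype.equivFin V ∘ scope k) then 1 else 0) / Fintype.card K := by
  rw [val_of_unweighted (unweighted_ofConstraints ar pred scope scope_inj),
    ← Equiv.sum_comp (Fintype.equivFin K).symm]
  rfl

theorem degree_ofConstraints [DecidableEq V] (v : V) :
    (ofConstraints ar pred scope scope_inj).degree (Fintype.equivFin V v) =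
      #{k | ∃ j, scope k j = v} := by
  refine card_equiv (Fintype.equivFin K).symm fun ρ => ?_
  simp only [mem_filter, mem_univ, true_and]
  exact exists_congr fun _ => (Fintype.equivFin V).apply_eq_iff_eq

end OfConstraints

section Regularize

variable (F : CSPInstance q n)

abbrev ActiveVar : Type := {i : Fin n // 0 < F.degree i}

abbrev Copy : Type := Σ i : F.ActiveVar, Fin (F.degree i)

abbrev Selector : Type := ∀ i : F.ActiveVar, Fin (F.degree i)

instance : NeZero F.m :=
  ⟨F.m_pos.ne'⟩

instance : Nonempty F.Selector :=
  ⟨fun i => ⟨0, i.2⟩⟩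

theorem degree_scope_pos (r : Fin F.m) (j : Fin (F.ar r)) : 0 < F.degree (F.scope r j) :=
  card_pos.mpr ⟨r, mem_filter.mpr ⟨mem_univ _, j, rfl⟩⟩

def copyScope (k : Fin F.m × F.Selector) (j : Fin (F.ar k.1)) : F.Copy :=
  ⟨⟨F.scope k.1 j, F.degree_scope_pos k.1 j⟩, k.2 _⟩

theorem copyScope_injective (k : Fin F.m × F.Selector) : Function.Injective (F.copyScope k) :=
  fun _ _ h => F.scope_inj k.1 (congrArg (fun c : F.Copy => c.1.1) h)

noncomputable def regularize : CSPInstance q (Fintype.card F.Copy) :=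
  ofConstraints (fun k : Fin F.m × F.Selector => F.ar k.1) (fun k => F.pred k.1) F.copyScope
    F.copyScope_injective

theorem copyScope_eq_iff {r : Fin F.m} {u : F.Selector} {j : Fin (F.ar r)} {i : F.ActiveVar}
    {b : Fin (F.degree i)} : F.copyScope (r, u) j = ⟨i, b⟩ ↔ F.scope r j = i ∧ u i = b :=
  (sigma_mk_apply_eq_mk_iff u).trans (and_congr_left' Subtype.ext_iff)

theorem card_selector_filter_apply_eq (i : F.ActiveVar) (b : Fin (F.degree i)) :
    #{u : F.Selector | u i = b} = ∏ i' ∈ univ.erase i, F.degree i' := by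
  simpa using Fintype.card_filter_piFinset_eq_of_mem
    (fun i : F.ActiveVar => (univ : Finset (Fin (F.degree i)))) i (mem_univ b)

theorem degree_regularize (c : F.Copy) :
    F.regularize.degree (Fintype.equivFin F.Copy c) = ∏ i : F.ActiveVar, F.degree i := by
  obtain ⟨i, b⟩ := c
  have hsplit : ({k | ∃ j, F.copyScope k j = ⟨i, b⟩} : Finset (Fin F.m × F.Selector)) =
      ({r | ∃ j, F.scope r j = i} : Finset (Fin F.m)) ×ˢ ({u | u i = b} : Finset F.Selector) := by
    ext ⟨r, u⟩
    simp only [mem_filter, mem_univ, true_and, mem_product, copyScope_eq_iff, exists_and_right]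
  rw [regularize, degree_ofConstraints, hsplit, card_product, card_selector_filter_apply_eq]
  exact mul_prod_erase univ (fun i : F.ActiveVar => F.degree i) (mem_univ i)

theorem regular_regularize : F.regularize.Regular :=
  ⟨_, fun c => by simpa using F.degree_regularize ((Fintype.equivFin F.Copy).symm c)⟩

noncomputable def restrict (ζ : F.Copy → Fin q) (u : F.Selector) (x₀ : Fin q) (i : Fin n) :
    Fin q :=
  if h : 0 < F.degree i then ζ ⟨⟨i, h⟩, u ⟨i, h⟩⟩ else x₀

theorem restrict_comp_scope (ζ : F.Copy → Fin q) (u : F.Selector) (x₀ : Fin q) (r : Fin F.m) :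
    F.restrict ζ u x₀ ∘ F.scope r = ζ ∘ F.copyScope (r, u) :=
  funext fun j => dif_pos (F.degree_scope_pos r j)

theorem val_regularize (ζ : Fin (Fintype.card F.Copy) → Fin q) :
    F.regularize.val ζ =
      (∑ r, ∑ u : F.Selector,
          if F.pred r (ζ ∘ Fintype.equivFin F.Copy ∘ F.copyScope (r, u)) then 1 else 0) /
        (F.m * Fintype.card F.Selector) := by
  rw [regularize, val_ofConstraints, Fintype.sum_prod_type, Fintype.card_prod, Fintype.card_fin,
    Nat.cast_mul]

theorem val_regularize_lift (hF : F.Unweighted) (χ : Fin n → Fin q) :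
    F.regularize.val (fun c => χ ((Fintype.equivFin F.Copy).symm c).1.1) = F.val χ := by
  have hlift : ∀ r u, (fun c => χ ((Fintype.equivFin F.Copy).symm c).1.1) ∘
      Fintype.equivFin F.Copy ∘ F.copyScope (r, u) = χ ∘ F.scope r :=
    fun _ _ => funext fun _ => by simp [copyScope]
  simp only [val_regularize, val_of_unweighted hF, hlift, sum_const, card_univ, nsmul_eq_mul,
    ← mul_sum]
  rw [mul_comm (F.m : ℝ), mul_div_mul_left _ _ (by positivity)]

theorem sum_val_restrict (hF : F.Unweighted) (ζ : Fin (Fintype.card F.Copy) → Fin q)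
    (x₀ : Fin q) :
    ∑ u, F.val (F.restrict (ζ ∘ Fintype.equivFin F.Copy) u x₀) =
      Fintype.card F.Selector * F.regularize.val ζ := by
  simp only [val_regularize, val_of_unweighted hF, restrict_comp_scope, Function.comp_assoc,
    ← sum_div]
  rw [sum_comm, mul_div_assoc', mul_comm (F.m : ℝ), mul_div_mul_left _ _ (by positivity)]

theorem exists_le_val_restrict (hF : F.Unweighted) (ζ : Fin (Fintype.card F.Copy) → Fin q)
    (x₀ : Fin q) :
    ∃ u, F.regularize.val ζ ≤ F.val (F.restrict (ζ ∘ Fintype.equivFin F.Copy) u x₀) := by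
  have hsum : ∑ _u : F.Selector, F.regularize.val ζ ≤
      ∑ u, F.val (F.restrict (ζ ∘ Fintype.equivFin F.Copy) u x₀) := by
    rw [sum_const, card_univ, nsmul_eq_mul, F.sum_val_restrict hF]
  obtain ⟨u, -, hu⟩ := exists_le_of_sum_le univ_nonempty hsum
  exact ⟨u, hu⟩

end Regularize

end CSPInstance

theorem regularization_max_general {q n : ℕ} (hq : 0 < q)
    (Λ : Set ((k : ℕ) × ((Fin k → Fin q) → Bool)))
    (F : CSPInstance q n) (hF : F.InstanceOf Λ) (hFunw : F.Unweighted)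
    (ε : ℝ) (hε : 0 < ε) :
    ∃ (n' : ℕ) (G : CSPInstance q n'),
      G.InstanceOf Λ ∧ G.Unweighted ∧ G.Regular ∧
      F.optMax ≤ G.optMax ∧
      ∀ ζ : Fin n' → Fin q, ∃ χ : Fin n → Fin q,
        G.val ζ - ε ≤ F.val χ := by
  let x₀ : Fin q := ⟨0, hq⟩
  refine ⟨_, F.regularize, CSPInstance.instanceOf_ofConstraints _ _ _ _ fun k => hF k.1,
    CSPInstance.unweighted_ofConstraints _ _ _ _, F.regular_regularize, ?_, fun ζ => ?_⟩
  · have : Nonempty (Fin n → Fin q) := ⟨fun _ => x₀⟩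
    exact CSPInstance.optMax_le_optMax_of_forall fun χ => ⟨_, (F.val_regularize_lift hFunw χ).ge⟩
  · obtain ⟨u, hu⟩ := F.exists_le_val_restrict hFunw ζ x₀
    exact ⟨_, by linarith⟩

/-- For every unweighted instance `F` of a Max-CSP `Λ` and every `ε > 0`,
there exists a regular unweighted instance `G` of the same Max-CSP `Λ` such that
(a) `Opt(F) ≤ Opt(G)`, and (b) for every assignment `ζ` of `G` there is an assignment
`χ` of `F` with `Val_χ(F) ≥ Val_ζ(G) − ε`. -/
theorem regularization_max {q n : ℕ} (hq : 0 < q)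
    (Λ : Set ((k : ℕ) × ((Fin k → Fin q) → Bool))) (hΛfin : Λ.Finite)
    (F : CSPInstance q n) (hF : F.InstanceOf Λ) (hFunw : F.Unweighted)
    (ε : ℝ) (hε : 0 < ε) :
    ∃ (n' : ℕ) (G : CSPInstance q n'),
      G.InstanceOf Λ ∧ G.Unweighted ∧ G.Regular ∧
      F.optMax ≤ G.optMax ∧
      ∀ ζ : Fin n' → Fin q, ∃ χ : Fin n → Fin q,
        G.val ζ - ε ≤ F.val χ :=
  regularization_max_general hq Λ F hF hFunw ε hε
end

section
/- Let Λ be a Max-CSP over domain [q] all of whose predicates have at least one satisfying input. For every weighted instance F of Λ and every δ ∈ (0,1), there exists an unweighted instance G of Λ over the same variables such that for every α ∈ (0,1] and every assignment ζ with Val_ζ(G) ≥ α·Opt(G), the same assignment satisfies Val_ζ(F) ≥ (α − δ)·Opt(F). -/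
open Finset

section Aux

variable {q n : ℕ}

lemma csp_val_le_optMax (F : CSPInstance q n) (χ : Fin n → Fin q) :
    F.val χ ≤ F.optMax :=
  le_ciSup (Set.Finite.bddAbove (Set.finite_range _)) χ

lemma csp_optMax_le (hq : 0 < q) (F : CSPInstance q n) {c : ℝ}
    (h : ∀ χ : Fin n → Fin q, F.val χ ≤ c) : F.optMax ≤ c := by
  haveI : Nonempty (Fin q) := ⟨⟨0, hq⟩⟩
  exact ciSup_le h

/-- The equivalence between a sigma of `Fin`s and `Fin` of the sum. -/
noncomputable def repEquiv {m : ℕ} (c : Fin m → ℕ) :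
    ((r : Fin m) × Fin (c r)) ≃ Fin (∑ r, c r) :=
  Fintype.equivOfCardEq (by simp [Fintype.card_sigma])

/-- Replicate each constraint of `F` with multiplicity `c r`, making the
instance unweighted. -/
noncomputable def CSPInstance.replicate (F : CSPInstance q n) (c : Fin F.m → ℕ)
    (hpos : 0 < ∑ r, c r) : CSPInstance q n where
  m := ∑ r, c r
  ar s := F.ar ((repEquiv c).symm s).1
  pred s := F.pred ((repEquiv c).symm s).1
  scope s := F.scope ((repEquiv c).symm s).1
  scope_inj s := F.scope_inj ((repEquiv c).symm s).1
  w _ := 1 / (∑ r, c r : ℕ)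
  w_nonneg _ := by positivity
  w_sum := by
    have h0 : ((∑ r, c r : ℕ) : ℝ) ≠ 0 := Nat.cast_ne_zero.mpr hpos.ne'
    rw [Finset.sum_const, Finset.card_univ, Fintype.card_fin, nsmul_eq_mul,
      mul_one_div, div_self h0]

lemma CSPInstance.replicate_instanceOf (F : CSPInstance q n) (c : Fin F.m → ℕ)
    (hpos : 0 < ∑ r, c r) (Λ : Set ((k : ℕ) × ((Fin k → Fin q) → Bool)))
    (hF : F.InstanceOf Λ) : (F.replicate c hpos).InstanceOf Λ :=
  fun s => hF ((repEquiv c).symm s).1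

lemma CSPInstance.replicate_unweighted (F : CSPInstance q n) (c : Fin F.m → ℕ)
    (hpos : 0 < ∑ r, c r) : (F.replicate c hpos).Unweighted :=
  fun _ => rfl

lemma CSPInstance.replicate_val (F : CSPInstance q n) (c : Fin F.m → ℕ)
    (hpos : 0 < ∑ r, c r) (ζ : Fin n → Fin q) :
    (F.replicate c hpos).val ζ =
      ∑ r, ((c r : ℝ) / (∑ r', c r' : ℕ)) *
        (if F.pred r (fun i => ζ (F.scope r i)) then 1 else 0) := by
  have h1 : (F.replicate c hpos).val ζ =
      ∑ s : Fin (∑ r, c r), (1 / (∑ r', c r' : ℕ) : ℝ) *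
        (if F.pred ((repEquiv c).symm s).1
          (fun i => ζ (F.scope ((repEquiv c).symm s).1 i)) then 1 else 0) := rfl
  rw [h1]
  rw [← Fintype.sum_equiv (repEquiv c)
    (fun p : (r : Fin F.m) × Fin (c r) =>
      (1 / (∑ r', c r' : ℕ) : ℝ) *
        (if F.pred p.1 (fun i => ζ (F.scope p.1 i)) then 1 else 0))
    _ (fun p => by rw [Equiv.symm_apply_apply])]
  rw [← Finset.univ_sigma_univ, Finset.sum_sigma]
  refine Finset.sum_congr rfl fun r _ => ?_
  show (∑ _s : Fin (c r), (1 / (∑ r', c r' : ℕ) : ℝ) *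
      (if F.pred r (fun i => ζ (F.scope r i)) then 1 else 0)) = _
  rw [Finset.sum_const, Finset.card_univ, Fintype.card_fin, nsmul_eq_mul]
  ring

end Aux

set_option maxHeartbeats 1000000 in
/-- For a Max-CSP `Λ` whose predicates all have a satisfying input,
every weighted instance `F` and every `δ ∈ (0,1)` admit an unweighted instance `G`
over the same variables such that any `α`-approximating assignment for `G`
(`α ∈ Set.Ioc (0 : ℝ) 1`) is an `(α−δ)`-approximating assignment for `F`. -/
theorem weighted_to_unweighted_max {q n : ℕ} (hq : 0 < q)
    (Λ : Set ((k : ℕ) × ((Fin k → Fin q) → Bool))) (hΛfin : Λ.Finite)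
    (hΛsat : ∀ P ∈ Λ, ∃ x, P.2 x = true)
    (F : CSPInstance q n) (hF : F.InstanceOf Λ)
    (δ : ℝ) (hδ : δ ∈ Set.Ioo (0 : ℝ) 1) :
    ∃ G : CSPInstance q n, G.InstanceOf Λ ∧ G.Unweighted ∧
      ∀ α ∈ Set.Ioc (0 : ℝ) 1, ∀ ζ : Fin n → Fin q,
        α * G.optMax ≤ G.val ζ → (α - δ) * F.optMax ≤ F.val ζ := by
  classical
  obtain ⟨hδ0, hδ1⟩ := hδ
  haveI : Nonempty (Fin q) := ⟨⟨0, hq⟩⟩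
  -- F has at least one constraint
  have hm0 : 0 < F.m := by
    rcases Nat.eq_zero_or_pos F.m with h0 | h
    · exfalso
      have hw := F.w_sum
      have huniv : (Finset.univ : Finset (Fin F.m)) = ∅ :=
        Finset.card_eq_zero.mp (by simp [h0])
      rw [huniv, Finset.sum_empty] at hw
      norm_num at hw
    · exact h
  have hmR : (0 : ℝ) < (F.m : ℝ) := by exact_mod_cast hm0
  -- choose the multiplier M
  set M : ℕ := max 1 ⌈4 * (F.m : ℝ) ^ 2 / δ⌉₊ with hM
  have hM1 : 1 ≤ M := le_max_left _ _
  have hMpos : (0 : ℝ) < M := by exact_mod_cast lt_of_lt_of_le one_pos hM1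
  have hMbig : 4 * (F.m : ℝ) ^ 2 / δ ≤ M :=
    le_trans (Nat.le_ceil _)
      (Nat.cast_le.mpr (le_max_right 1 ⌈4 * (F.m : ℝ) ^ 2 / δ⌉₊))
  -- multiplicities
  set c : Fin F.m → ℕ := fun r => ⌈(M : ℝ) * F.w r⌉₊ with hc
  have hcl : ∀ r, (M : ℝ) * F.w r ≤ c r := fun r => Nat.le_ceil _
  have hcu : ∀ r, (c r : ℝ) ≤ (M : ℝ) * F.w r + 1 := by
    intro r
    have h0 : (0 : ℝ) ≤ (M : ℝ) * F.w r := mul_nonneg hMpos.le (F.w_nonneg r)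
    exact (Nat.ceil_lt_add_one h0).le
  have hm'l : (M : ℝ) ≤ ((∑ r, c r : ℕ) : ℝ) := by
    push_cast
    calc (M : ℝ) = M * ∑ r, F.w r := by rw [F.w_sum, mul_one]
      _ = ∑ r, (M : ℝ) * F.w r := by rw [Finset.mul_sum]
      _ ≤ ∑ r, (c r : ℝ) := Finset.sum_le_sum fun r _ => hcl r
  have hm'u : ((∑ r, c r : ℕ) : ℝ) ≤ (M : ℝ) + F.m := by
    push_cast
    calc ∑ r, (c r : ℝ) ≤ ∑ r : Fin F.m, ((M : ℝ) * F.w r + 1) :=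
          Finset.sum_le_sum fun r _ => hcu r
      _ = (M : ℝ) + F.m := by
          rw [Finset.sum_add_distrib, ← Finset.mul_sum, F.w_sum, mul_one,
            Finset.sum_const, Finset.card_univ, Fintype.card_fin, nsmul_eq_mul, mul_one]
  have hNR : (0 : ℝ) < ((∑ r, c r : ℕ) : ℝ) := lt_of_lt_of_le hMpos hm'l
  have hpos : 0 < ∑ r, c r := by exact_mod_cast hNR
  -- the unweighted instance
  refine ⟨F.replicate c hpos, F.replicate_instanceOf c hpos Λ hF,
    F.replicate_unweighted c hpos, ?_⟩
  set G := F.replicate c hpos with hG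
  set N : ℝ := ((∑ r, c r : ℕ) : ℝ) with hN
  -- pointwise per-constraint weight approximation
  set ε : ℝ := 2 * (F.m : ℝ) / M with hε
  have hε0 : 0 ≤ ε := by positivity
  have hdiff : ∀ r : Fin F.m, |(c r : ℝ) / N - F.w r| ≤ 1 / M + F.w r * F.m / M := by
    intro r
    have hwr := F.w_nonneg r
    rw [abs_le]
    constructor
    · -- w r - (1/M + w r * m / M) ≤ c r / N
      have h1 : (M : ℝ) * F.w r / ((M : ℝ) + F.m) ≤ (c r : ℝ) / N := by
        apply div_le_div₀ (Nat.cast_nonneg _) (hcl r) hNR hm'u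
      have h2 : F.w r - (M : ℝ) * F.w r / ((M : ℝ) + F.m) = F.w r * F.m / ((M : ℝ) + F.m) := by
        field_simp
        ring
      have h3 : F.w r * F.m / ((M : ℝ) + F.m) ≤ F.w r * F.m / M := by
        rw [div_le_div_iff₀ (by linarith) hMpos]
        nlinarith [mul_nonneg hwr hmR.le]
      have h4 : (0 : ℝ) ≤ 1 / M := by positivity
      nlinarith
    · -- c r / N - w r ≤ 1/M + ...
      have h1 : (c r : ℝ) / N ≤ ((M : ℝ) * F.w r + 1) / M := by
        apply div_le_div₀ (by positivity) (hcu r) hMpos hm'l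
      have h2 : ((M : ℝ) * F.w r + 1) / M = F.w r + 1 / M := by
        field_simp
      have h3 : (0 : ℝ) ≤ F.w r * F.m / M := by positivity
      linarith
  -- the approximation bound
  have happrox : ∀ ζ : Fin n → Fin q, |G.val ζ - F.val ζ| ≤ ε := by
    intro ζ
    rw [hG, F.replicate_val c hpos, CSPInstance.val, ← hN, ← Finset.sum_sub_distrib]
    refine le_trans (Finset.abs_sum_le_sum_abs _ _) ?_
    have hb : ∀ r ∈ (Finset.univ : Finset (Fin F.m)),
        |((c r : ℝ) / N) * (if F.pred r (fun i => ζ (F.scope r i)) then 1 else 0)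
          - F.w r * (if F.pred r (fun i => ζ (F.scope r i)) then 1 else 0)|
          ≤ 1 / M + F.w r * F.m / M := by
      intro r _
      rw [← sub_mul, abs_mul]
      have h1 : |if F.pred r (fun i => ζ (F.scope r i)) then (1:ℝ) else 0| ≤ 1 := by
        split <;> simp
      calc |(c r : ℝ) / N - F.w r| * |if F.pred r (fun i => ζ (F.scope r i)) then (1:ℝ) else 0|
          ≤ |(c r : ℝ) / N - F.w r| * 1 :=
            mul_le_mul_of_nonneg_left h1 (abs_nonneg _)
        _ ≤ 1 / M + F.w r * F.m / M := by rw [mul_one]; exact hdiff r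
    refine le_trans (Finset.sum_le_sum hb) ?_
    have heq : ∑ r : Fin F.m, (1 / (M : ℝ) + F.w r * F.m / M) = ε := by
      rw [Finset.sum_add_distrib, Finset.sum_const, Finset.card_univ, Fintype.card_fin,
        nsmul_eq_mul]
      have h2 : ∑ r, F.w r * (F.m : ℝ) / M = (F.m : ℝ) / M := by
        rw [← Finset.sum_div, ← Finset.sum_mul, F.w_sum, one_mul]
      rw [h2, hε]
      field_simp
      ring
    exact heq.le
  -- lower bound on Opt(F)
  have hOptF_lb : 1 / (F.m : ℝ) ≤ F.optMax := by
    obtain ⟨r0, -, hr0⟩ := Finset.exists_max_image (Finset.univ : Finset (Fin F.m)) F.w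
      ⟨⟨0, hm0⟩, Finset.mem_univ _⟩
    have hwr0 : 1 / (F.m : ℝ) ≤ F.w r0 := by
      by_contra h
      push_neg at h
      have hlt : ∑ r, F.w r < ∑ r : Fin F.m, 1 / (F.m : ℝ) := by
        apply Finset.sum_lt_sum_of_nonempty ⟨⟨0, hm0⟩, Finset.mem_univ _⟩
        intro r _
        exact lt_of_le_of_lt (hr0 r (Finset.mem_univ r)) h
      rw [F.w_sum, Finset.sum_const, Finset.card_univ, Fintype.card_fin, nsmul_eq_mul] at hlt
      rw [mul_one_div, div_self hmR.ne'] at hlt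
      exact lt_irrefl _ hlt
    obtain ⟨x, hx⟩ := hΛsat _ (hF r0)
    set ζ0 : Fin n → Fin q := fun i =>
      if h : ∃ j, F.scope r0 j = i then x h.choose else ⟨0, hq⟩ with hζ0
    have hsat : F.pred r0 (fun i => ζ0 (F.scope r0 i)) = true := by
      have hfe : (fun i => ζ0 (F.scope r0 i)) = x := by
        funext j
        have hex : ∃ j', F.scope r0 j' = F.scope r0 j := ⟨j, rfl⟩
        simp only [hζ0, dif_pos hex]
        congr 1
        exact F.scope_inj r0 hex.choose_spec
      rw [hfe]
      exact hx
    have hval0 : 1 / (F.m : ℝ) ≤ F.val ζ0 := by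
      calc 1 / (F.m : ℝ)
          ≤ F.w r0 * (if F.pred r0 (fun i => ζ0 (F.scope r0 i)) then 1 else 0) := by
            rw [if_pos hsat, mul_one]; exact hwr0
        _ ≤ F.val ζ0 :=
            Finset.single_le_sum (f := fun r =>
              F.w r * (if F.pred r (fun i => ζ0 (F.scope r i)) then (1:ℝ) else 0))
              (fun r _ => by have := F.w_nonneg r; positivity) (Finset.mem_univ r0)
    exact le_trans hval0 (csp_val_le_optMax F ζ0)
  have hOptF0 : 0 < F.optMax := lt_of_lt_of_le (by positivity) hOptF_lb
  -- Opt(F) ≤ Opt(G) + ε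
  have hOptFG : F.optMax ≤ G.optMax + ε := by
    apply csp_optMax_le hq
    intro χ
    have h1 := happrox χ
    have h2 := csp_val_le_optMax G χ
    rw [abs_le] at h1
    linarith [h1.1]
  -- 2 ε ≤ δ * Opt(F)
  have hεsmall : 2 * ε ≤ δ * F.optMax := by
    have h1 : 4 * (F.m : ℝ) / M ≤ δ / F.m := by
      rw [div_le_div_iff₀ hMpos hmR]
      have h2 := (div_le_iff₀ hδ0).mp hMbig
      nlinarith
    have h3 : δ / F.m ≤ δ * F.optMax := by
      rw [div_eq_mul_one_div]
      exact mul_le_mul_of_nonneg_left hOptF_lb hδ0.le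
    rw [hε]
    calc 2 * (2 * (F.m : ℝ) / M) = 4 * (F.m : ℝ) / M := by ring
      _ ≤ δ / F.m := h1
      _ ≤ δ * F.optMax := h3
  -- final chain
  intro α hα ζ hζ
  obtain ⟨hα0, hα1⟩ := hα
  have h1 := happrox ζ
  rw [abs_le] at h1
  have h2 : G.val ζ - ε ≤ F.val ζ := by linarith [h1.1]
  have h4 : α * F.optMax ≤ α * (G.optMax + ε) := mul_le_mul_of_nonneg_left hOptFG hα0.le
  have h5 : α * ε ≤ ε := by nlinarith
  nlinarith [hεsmall]
end

section
/- Let F be a weighted instance of a Min-CSP with constraints C_1,…,C_m whose weights satisfy w_1 ≥ … ≥ w_m ≥ 0 and Σ_r w_r = 1, and let k be such that some assignment falsifies C_1,…,C_{k−1} while every assignment satisfies at least one of C_1,…,C_k. Call a constraint C_i light if w_i ≤ w_k/m², heavy if w_i ≥ w_k·m², and medium otherwise. Let F' be the weighted instance consisting of the medium and heavy constraints of F, where each heavy constraint's weight is replaced by w_k·m² and then all weights are multiplied by the normalizing factor σ > 1 making them sum to 1. Then: (A) Opt(F) ≥ (1/σ)·Opt(F'); and (B) for every assignment χ that falsifies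 all heavy constraints, Val_χ(F) ≤ (1/σ)·Val_χ(F') + w_k/m. -/
open Finset

/-- Value of an assignment with respect to a modified weight function on the
constraints of `F`. -/
noncomputable def CSPInstance.valW {q n : ℕ} (F : CSPInstance q n)
    (w' : Fin F.m → ℝ) (χ : Fin n → Fin q) : ℝ :=
  ∑ r, w' r * (if F.pred r (fun i => χ (F.scope r i)) then 1 else 0)

/-- With weights sorted in descending order and `k` the critical
index, call `C_i` light if `w_i ≤ w_k/m²` and heavy if `w_i ≥ w_k·m²`. Let `F'`
consist of the medium and heavy constraints, heavy weights truncated to `w_k·m²`,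
all rescaled by the normalizing factor `σ > 1` (so light constraints get weight
`0`, and the remaining weights sum to `1`). Then
(A) `Opt(F) ≥ (1/σ)·Opt(F')`, and
(B) every assignment `χ` falsifying all heavy constraints satisfies
`Val_χ(F) ≤ (1/σ)·Val_χ(F') + w_k/m`. -/
theorem truncated_instance_properties {q n : ℕ} (F : CSPInstance q n) (k : Fin F.m)
    (hsorted : ∀ i j : Fin F.m, i ≤ j → F.w j ≤ F.w i)
    (hfals : ∃ χ : Fin n → Fin q, ∀ i : Fin F.m, i < k →
      F.pred i (fun t => χ (F.scope i t)) = false)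
    (hsat : ∀ χ : Fin n → Fin q, ∃ i : Fin F.m, i ≤ k ∧
      F.pred i (fun t => χ (F.scope i t)) = true)
    (σ : ℝ) (hσ : 1 < σ)
    (w' : Fin F.m → ℝ)
    (hw' : ∀ i, w' i =
      if F.w k / (F.m : ℝ) ^ 2 < F.w i
        then σ * min (F.w i) (F.w k * (F.m : ℝ) ^ 2)
        else 0)
    (hnorm : ∑ i, w' i = 1) :
    (1 / σ) * (⨅ χ : Fin n → Fin q, F.valW w' χ) ≤ F.optMin ∧
    ∀ χ : Fin n → Fin q,
      (∀ i : Fin F.m, F.w k * (F.m : ℝ) ^ 2 ≤ F.w i →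
        F.pred i (fun t => χ (F.scope i t)) = false) →
      F.val χ ≤ (1 / σ) * F.valW w' χ + F.w k / (F.m : ℝ) := by
  obtain ⟨χ₀, -⟩ := hfals
  have hne : Nonempty (Fin n → Fin q) := ⟨χ₀⟩
  have hm0 : 0 < F.m := k.pos
  have hm : (0:ℝ) < (F.m : ℝ) := by exact_mod_cast hm0
  have hm2 : (0:ℝ) < (F.m:ℝ)^2 := by positivity
  have hσ0 : (0:ℝ) < σ := lt_trans one_pos hσ
  have hwk : (0:ℝ) ≤ F.w k := F.w_nonneg k
  have hw'nn : ∀ i, 0 ≤ w' i := by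
    intro i
    rw [hw' i]
    split
    · exact mul_nonneg hσ0.le (le_min (F.w_nonneg i) (by positivity))
    · exact le_refl 0
  have keyterm : ∀ (χ : Fin n → Fin q) (i : Fin F.m),
      (1/σ) * (w' i * (if F.pred i (fun t => χ (F.scope i t)) then (1:ℝ) else 0))
        ≤ F.w i * (if F.pred i (fun t => χ (F.scope i t)) then 1 else 0) := by
    intro χ i
    set I := (if F.pred i (fun t => χ (F.scope i t)) then (1:ℝ) else 0) with hI
    have hI0 : 0 ≤ I := by rw [hI]; positivity
    rw [hw' i]
    split
    · have hmin : min (F.w i) (F.w k * (F.m:ℝ)^2) ≤ F.w i := min_le_left _ _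
      have heq : (1/σ) * (σ * min (F.w i) (F.w k * (F.m:ℝ)^2) * I)
          = min (F.w i) (F.w k * (F.m:ℝ)^2) * I := by
        field_simp
      rw [heq]
      exact mul_le_mul_of_nonneg_right hmin hI0
    · simp only [zero_mul, mul_zero]
      exact mul_nonneg (F.w_nonneg i) hI0
  have hvalWnn : ∀ χ, 0 ≤ F.valW w' χ := by
    intro χ
    apply Finset.sum_nonneg
    intro i _
    exact mul_nonneg (hw'nn i) (by positivity)
  have keyA : ∀ χ, (1/σ) * F.valW w' χ ≤ F.val χ := by
    intro χ
    rw [CSPInstance.valW, CSPInstance.val, Finset.mul_sum]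
    exact Finset.sum_le_sum fun i _ => keyterm χ i
  constructor
  · rw [CSPInstance.optMin]
    apply le_ciInf
    intro χ
    have h1 : (⨅ χ' : Fin n → Fin q, F.valW w' χ') ≤ F.valW w' χ := by
      apply ciInf_le
      refine ⟨0, fun x hx => ?_⟩
      obtain ⟨χ'', rfl⟩ := hx
      exact hvalWnn χ''
    calc (1/σ) * (⨅ χ' : Fin n → Fin q, F.valW w' χ') ≤ (1/σ) * F.valW w' χ :=
          mul_le_mul_of_nonneg_left h1 (by positivity)
      _ ≤ F.val χ := keyA χ
  · intro χ hheavy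
    have key : ∀ i : Fin F.m,
        F.w i * (if F.pred i (fun t => χ (F.scope i t)) then (1:ℝ) else 0)
          ≤ (1/σ) * (w' i * (if F.pred i (fun t => χ (F.scope i t)) then (1:ℝ) else 0))
            + F.w k / (F.m:ℝ)^2 := by
      intro i
      set I := (if F.pred i (fun t => χ (F.scope i t)) then (1:ℝ) else 0) with hI
      have hI0 : 0 ≤ I := by rw [hI]; positivity
      have hI1 : I ≤ 1 := by rw [hI]; split <;> norm_num
      have hdk : (0:ℝ) ≤ F.w k / (F.m:ℝ)^2 := by positivity
      rw [hw' i]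
      split
      · rename_i h
        rcases le_or_gt (F.w k * (F.m:ℝ)^2) (F.w i) with hh | hh
        · have hfalse : F.pred i (fun t => χ (F.scope i t)) = false := hheavy i hh
          have hIz : I = 0 := by rw [hI, hfalse]; simp
          rw [hIz]
          simp only [mul_zero]
          linarith
        · have hmin : min (F.w i) (F.w k * (F.m:ℝ)^2) = F.w i := min_eq_left hh.le
          rw [hmin]
          have heq : (1/σ) * (σ * F.w i * I) = F.w i * I := by field_simp
          rw [heq]
          linarith
      · rename_i h
        push_neg at h
        simp only [zero_mul, mul_zero]
        have : F.w i * I ≤ F.w i := by nlinarith [F.w_nonneg i]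
        linarith
    have hsum : F.val χ ≤ ∑ i : Fin F.m,
        ((1/σ) * (w' i * (if F.pred i (fun t => χ (F.scope i t)) then (1:ℝ) else 0))
          + F.w k / (F.m:ℝ)^2) := by
      rw [CSPInstance.val]
      exact Finset.sum_le_sum fun i _ => key i
    have heq2 : ∑ i : Fin F.m,
        ((1/σ) * (w' i * (if F.pred i (fun t => χ (F.scope i t)) then (1:ℝ) else 0))
          + F.w k / (F.m:ℝ)^2)
        = (1/σ) * F.valW w' χ + F.w k / (F.m:ℝ) := by
      rw [Finset.sum_add_distrib, ← Finset.mul_sum, Finset.sum_const, Finset.card_univ,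
        Fintype.card_fin, nsmul_eq_mul, CSPInstance.valW]
      congr 1
      field_simp
    linarith [heq2 ▸ hsum]
end

section
/- Let F be a weighted instance of a Min-CSP with weights w_1 ≥ … ≥ w_m ≥ 0 summing to 1, let k be such that some assignment falsifies C_1,…,C_{k−1} while every assignment satisfies at least one of C_1,…,C_k, and let F' be the instance obtained from the medium and heavy constraints of F (heavy weights truncated to w_k·m², all weights rescaled by σ > 1 to sum to 1). Then Opt(F') ≤ σ·w_k·m, and consequently every assignment ζ with Val_ζ(F') ≤ c·Opt(F') for some constant c < m must falsify every heavy constraint of F'. -/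
open Finset

/-- With weights sorted in descending order, `k` the critical index,
and `F'` the rescaled truncated instance (light constraints dropped, heavy weights
truncated to `w_k·m²`, all rescaled by the normalizing factor `σ > 1`), we have
`Opt(F') ≤ σ·w_k·m`; consequently every assignment `ζ` with
`Val_ζ(F') ≤ c·Opt(F')` for some constant `c < m` falsifies every heavy
constraint of `F'`. -/
theorem truncated_instance_opt_bound {q n : ℕ} (F : CSPInstance q n) (k : Fin F.m)
    (hsorted : ∀ i j : Fin F.m, i ≤ j → F.w j ≤ F.w i)
    (hfals : ∃ χ : Fin n → Fin q, ∀ i : Fin F.m, i < k →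
      F.pred i (fun t => χ (F.scope i t)) = false)
    (hsat : ∀ χ : Fin n → Fin q, ∃ i : Fin F.m, i ≤ k ∧
      F.pred i (fun t => χ (F.scope i t)) = true)
    (σ : ℝ) (hσ : 1 < σ)
    (w' : Fin F.m → ℝ)
    (hw' : ∀ i, w' i =
      if F.w k / (F.m : ℝ) ^ 2 < F.w i
        then σ * min (F.w i) (F.w k * (F.m : ℝ) ^ 2)
        else 0)
    (hnorm : ∑ i, w' i = 1) :
    (⨅ χ : Fin n → Fin q, F.valW w' χ) ≤ σ * F.w k * (F.m : ℝ) ∧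
    ∀ c : ℝ, c < (F.m : ℝ) → ∀ ζ : Fin n → Fin q,
      F.valW w' ζ ≤ c * (⨅ χ : Fin n → Fin q, F.valW w' χ) →
      ∀ i : Fin F.m, F.w k * (F.m : ℝ) ^ 2 ≤ F.w i →
        F.pred i (fun t => ζ (F.scope i t)) = false := by
  obtain ⟨χ₀, hχ₀⟩ := hfals
  have hne : Nonempty (Fin n → Fin q) := ⟨χ₀⟩
  have hσ0 : (0:ℝ) < σ := lt_trans one_pos hσ
  have hw'nn : ∀ i, 0 ≤ w' i := by
    intro i; rw [hw' i]
    split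
    · exact mul_nonneg hσ0.le
        (le_min (F.w_nonneg i) (mul_nonneg (F.w_nonneg k) (by positivity)))
    · exact le_refl 0
  have hwk : 0 < F.w k := by
    rcases lt_or_eq_of_le (F.w_nonneg k) with h | h
    · exact h
    · exfalso
      have hz : ∑ i, w' i = 0 := Finset.sum_eq_zero (fun i _ => by
        rw [hw' i]
        split
        · rw [← h]; simp [min_eq_right (F.w_nonneg i)]
        · rfl)
      rw [hnorm] at hz; norm_num at hz
  have hm2 : 2 ≤ F.m := by
    by_contra hm
    push_neg at hm
    have hm1 : F.m = 1 := by have := k.isLt; omega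
    have hz : ∑ i, w' i = 0 := Finset.sum_eq_zero (fun i _ => by
      have hik : i = k := by
        have h1 := i.isLt; have h2 := k.isLt
        apply Fin.ext; omega
      rw [hw' i, hik]
      have hmr : ((F.m : ℝ)) ^ 2 = 1 := by rw [hm1]; norm_num
      have : ¬ (F.w k / (F.m : ℝ) ^ 2 < F.w k) := by rw [hmr]; norm_num
      rw [if_neg this])
    rw [hnorm] at hz; norm_num at hz
  have hm2' : (2:ℝ) ≤ (F.m : ℝ) := by exact_mod_cast hm2
  -- each contribution of valW w' χ₀ is at most σ * w_k
  have hval0 : F.valW w' χ₀ ≤ σ * F.w k * (F.m : ℝ) := by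
    have hterm : ∀ r ∈ Finset.univ, w' r *
        (if F.pred r (fun t => χ₀ (F.scope r t)) then (1:ℝ) else 0) ≤ σ * F.w k := by
      intro r _
      by_cases hrk : r < k
      · rw [hχ₀ r hrk]; simp; positivity
      · have hkr : k ≤ r := le_of_not_gt hrk
        have h1 : w' r ≤ σ * F.w k := by
          rw [hw' r]
          split
          · calc σ * min (F.w r) (F.w k * (F.m:ℝ)^2) ≤ σ * F.w r :=
                  mul_le_mul_of_nonneg_left (min_le_left _ _) hσ0.le
              _ ≤ σ * F.w k := mul_le_mul_of_nonneg_left (hsorted k r hkr) hσ0.le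
          · positivity
        calc w' r * (if F.pred r (fun t => χ₀ (F.scope r t)) then (1:ℝ) else 0)
            ≤ w' r * 1 := by
              apply mul_le_mul_of_nonneg_left _ (hw'nn r)
              split <;> norm_num
          _ = w' r := mul_one _
          _ ≤ σ * F.w k := h1
    calc F.valW w' χ₀ ≤ (Finset.univ : Finset (Fin F.m)).card • (σ * F.w k) :=
          Finset.sum_le_card_nsmul _ _ _ hterm
      _ = (F.m : ℝ) * (σ * F.w k) := by
          simp [nsmul_eq_mul]
      _ = σ * F.w k * (F.m : ℝ) := by ring
  have hvalnn : ∀ χ : Fin n → Fin q, 0 ≤ F.valW w' χ := by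
    intro χ
    apply Finset.sum_nonneg
    intro r _
    apply mul_nonneg (hw'nn r)
    split <;> norm_num
  have hbdd : BddBelow (Set.range fun χ : Fin n → Fin q => F.valW w' χ) := by
    refine ⟨0, ?_⟩
    rintro x ⟨χ, rfl⟩
    exact hvalnn χ
  have hinf_le : (⨅ χ : Fin n → Fin q, F.valW w' χ) ≤ σ * F.w k * (F.m : ℝ) :=
    le_trans (ciInf_le hbdd χ₀) hval0
  have hinf0 : 0 ≤ ⨅ χ : Fin n → Fin q, F.valW w' χ := le_ciInf hvalnn
  refine ⟨hinf_le, ?_⟩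
  intro c hc ζ hval i hi
  by_contra hpred
  have hpred' : F.pred i (fun t => ζ (F.scope i t)) = true := by
    simpa using hpred
  -- w' i = σ * w_k * m²
  have hcond : F.w k / (F.m : ℝ) ^ 2 < F.w i := by
    rw [div_lt_iff₀ (by positivity)]
    have h4 : (1:ℝ) < (F.m:ℝ)^2 := by nlinarith
    have h5 : F.w k < F.w k * (F.m:ℝ)^2 := lt_mul_of_one_lt_right hwk h4
    have h6 : F.w i ≤ F.w i * (F.m:ℝ)^2 :=
      le_mul_of_one_le_right (F.w_nonneg i) h4.le
    linarith
  have hw'i : w' i = σ * (F.w k * (F.m : ℝ) ^ 2) := by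
    rw [hw' i, if_pos hcond, min_eq_right hi]
  have hlow : σ * (F.w k * (F.m : ℝ) ^ 2) ≤ F.valW w' ζ := by
    rw [← hw'i]
    have h := Finset.single_le_sum (f := fun r => w' r *
        (if F.pred r (fun t => ζ (F.scope r t)) then (1:ℝ) else 0))
      (fun r _ => by
        apply mul_nonneg (hw'nn r); split <;> norm_num)
      (Finset.mem_univ i)
    calc w' i = w' i * (if F.pred i (fun t => ζ (F.scope i t)) then (1:ℝ) else 0) := by
          rw [hpred']; simp
      _ ≤ ∑ r, w' r * (if F.pred r (fun t => ζ (F.scope r t)) then (1:ℝ) else 0) := h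
      _ = F.valW w' ζ := rfl
  have hub : c * (⨅ χ : Fin n → Fin q, F.valW w' χ) < σ * (F.w k * (F.m : ℝ) ^ 2) := by
    rcases le_or_gt c 0 with hc0 | hc0
    · have : c * (⨅ χ : Fin n → Fin q, F.valW w' χ) ≤ 0 :=
        mul_nonpos_of_nonpos_of_nonneg hc0 hinf0
      have hpos : 0 < σ * (F.w k * (F.m:ℝ)^2) := by positivity
      linarith
    · calc c * (⨅ χ : Fin n → Fin q, F.valW w' χ)
          ≤ c * (σ * F.w k * (F.m : ℝ)) := mul_le_mul_of_nonneg_left hinf_le hc0.le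
        _ < (F.m : ℝ) * (σ * F.w k * (F.m : ℝ)) := by
            apply mul_lt_mul_of_pos_right hc
            positivity
        _ = σ * (F.w k * (F.m : ℝ) ^ 2) := by ring
  linarith
end
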